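/- Applying the Clifford process with parameter q = +1 (resp. q = -1) to the real Clifford algebra C(r,s) (with grading automorphism σ) yields an algebra isomorphic to C(r+1, s) (resp. C(r, s+1)). -/

import Mathlib

/-!
Write `C = C(Q)` and let `C' = C(Q ⊕ q·x²)`, with `v = ι(0, 1)` the new generator. Then `v² = q`,
and `v` anticommutes with the old generators, so `v a = σ(a) v` for `a ∈ C`. Hence
`(a, b) ↦ a + b v` carries the Clifford-process product to the product of `C'`; it is onto because
its image is a subalgebra containing all generators. It is injective because `C'` acts on `C ⊕ Cv`
by right multiplication: the matrix `!![a, b; q σ b, σ a]` of `a + b v` in the basis `(1, v)`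
defines an algebra map `C' → M₂(C)` from which `(a, b)` can be read off.
The signature `(r + 1, s)` resp. `(r, s + 1)` is `(r, s) ⊕ (±1)·x²`.
-/

open CliffordAlgebra

/-- The diagonal quadratic form of signature `(r, s)`: the first `r` weights are `+1`
and the remaining `s` weights are `-1`. -/
noncomputable def sigQF (k : Type*) [Field k] (r s : ℕ) :
    QuadraticForm k (Fin (r + s) → k) :=
  QuadraticMap.weightedSumSquares k (fun i : Fin (r + s) => if (i : ℕ) < r then (1 : k) else -1)

/-- The Clifford-process product on `Ā = A ⊕ Av` with `v² = q`, `va = σ(a)v`. -/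
def cpMul {k A : Type*} [Field k] [Ring A] [Module k A]
    [SMulCommClass k A A] [IsScalarTower k A A]
    (q : k) (σ : A → A) (p r : A × A) : A × A :=
  (p.1 * r.1 + q • (p.2 * σ r.2), p.1 * r.2 + p.2 * σ r.1)

section ProcessMatrix

variable {k A : Type*} [Field k] [Ring A] [Algebra k A] (q : k) (σ : A →ₐ[k] A)

def processMatrix : A × A →ₗ[k] Matrix (Fin 2) (Fin 2) A where
  toFun p := !![p.1, p.2; q • σ p.2, σ p.1]
  map_add' p u := by ext i j; fin_cases i <;> fin_cases j <;> simp
  map_smul' c p := by ext i j; fin_cases i <;> fin_cases j <;> simp [smul_comm q c]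

theorem processMatrix_apply (p : A × A) :
    processMatrix q σ p = !![p.1, p.2; q • σ p.2, σ p.1] := rfl

theorem processMatrix_injective : Function.Injective (processMatrix q σ) := fun _ _ h =>
  Prod.ext (congr_fun₂ h 0 0) (congr_fun₂ h 0 1)

theorem processMatrix_algebraMap (c : k) :
    processMatrix q σ (algebraMap k A c, 0) = algebraMap k _ c := by
  ext i j
  fin_cases i <;> fin_cases j <;> simp [processMatrix_apply, Matrix.algebraMap_eq_diagonal]

theorem processMatrix_cpMul (hσ : Function.Involutive σ) (p u : A × A) :
    processMatrix q σ (cpMul q σ p u) = processMatrix q σ p * processMatrix q σ u := by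
  simp only [processMatrix_apply, Matrix.mul_fin_two, cpMul, map_add, map_mul, map_smul, hσ _,
    smul_add, mul_smul_comm, smul_mul_assoc]
  rw [add_comm (q • (σ p.1 * σ u.2)), add_comm (σ p.1 * σ u.1)]

end ProcessMatrix

namespace CliffordAlgebra

variable {k V : Type*} [Field k] [AddCommGroup V] [Module k V] (Q : QuadraticForm k V) (q : k)

local notation "Q'" => Q.prod (q • QuadraticMap.sq)

def mapInl : CliffordAlgebra Q →ₐ[k] CliffordAlgebra Q' :=
  map (QuadraticMap.Isometry.inl Q _)

theorem mapInl_ι (x : V) : mapInl Q q (ι Q x) = ι Q' (x, 0) := map_apply_ι _ _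

theorem ι_inr_mul_ι_inr : ι Q' (0, 1) * ι Q' (0, 1) = algebraMap k _ q := by
  rw [ι_sq_scalar]; simp

theorem ι_inr_mul_mapInl (a : CliffordAlgebra Q) :
    ι Q' (0, 1) * mapInl Q q a = mapInl Q q (involute a) * ι Q' (0, 1) := by
  induction a using CliffordAlgebra.induction with
  | algebraMap c => simp only [AlgHom.commutes]; rw [Algebra.commutes]
  | ι x =>
    rw [involute_ι, map_neg, mapInl_ι, neg_mul, ← ι_mul_ι_comm_of_isOrtho]
    exact QuadraticMap.IsOrtho.inr_inl _ _
  | mul a b ha hb =>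
    rw [map_mul, ← mul_assoc, ha, mul_assoc, hb, ← mul_assoc, ← map_mul, ← map_mul]
  | add a b ha hb => simp only [map_add, mul_add, add_mul, ha, hb]

def ofProcess : CliffordAlgebra Q × CliffordAlgebra Q →ₗ[k] CliffordAlgebra Q' :=
  (mapInl Q q).toLinearMap.coprod (LinearMap.mulRight k (ι Q' (0, 1)) ∘ₗ (mapInl Q q).toLinearMap)

theorem ofProcess_apply (p : CliffordAlgebra Q × CliffordAlgebra Q) :
    ofProcess Q q p = mapInl Q q p.1 + mapInl Q q p.2 * ι Q' (0, 1) := rfl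

theorem ofProcess_cpMul (p u : CliffordAlgebra Q × CliffordAlgebra Q) :
    ofProcess Q q (cpMul q involute p u) = ofProcess Q q p * ofProcess Q q u := by
  have hvv : ∀ c, ι Q' (0, 1) * (mapInl Q q c * ι Q' (0, 1)) = q • mapInl Q q (involute c) :=
    fun c => by
      rw [← mul_assoc, ι_inr_mul_mapInl, mul_assoc, ι_inr_mul_ι_inr, ← Algebra.commutes,
        Algebra.smul_def]
  simp only [ofProcess_apply, cpMul, map_add, map_mul, map_smul, mul_add, add_mul, mul_assoc,
    ι_inr_mul_mapInl, hvv, mul_smul_comm]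
  abel

theorem ofProcess_surjective : Function.Surjective (ofProcess Q q) := by
  intro m
  induction m using CliffordAlgebra.induction with
  | algebraMap c => exact ⟨(algebraMap k _ c, 0), by simp [ofProcess_apply]⟩
  | ι x =>
    refine ⟨(ι Q x.1, algebraMap k _ x.2), ?_⟩
    rw [ofProcess_apply, mapInl_ι, AlgHom.commutes, ← Algebra.smul_def, ← map_smul, ← map_add]
    simp
  | mul a b ha hb =>
    obtain ⟨p, rfl⟩ := ha
    obtain ⟨u, rfl⟩ := hb
    exact ⟨cpMul q involute p u, ofProcess_cpMul Q q p u⟩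
  | add a b ha hb =>
    obtain ⟨p, rfl⟩ := ha
    obtain ⟨u, rfl⟩ := hb
    exact ⟨p + u, map_add _ p u⟩

theorem cpMul_involute_ι_algebraMap_self (x : V) (t : k) :
    cpMul q involute (ι Q x, algebraMap k _ t) (ι Q x, algebraMap k _ t) =
      (algebraMap k _ (Q' (x, t)), 0) := by
  refine Prod.ext ?_ ?_
  · simp [cpMul, ι_sq_scalar, Algebra.smul_def, ← map_mul]
  · simp only [cpMul, involute_ι, AlgHom.commutes, mul_neg]
    rw [Algebra.commutes, add_neg_cancel]

def toProcessMatrix : CliffordAlgebra Q' →ₐ[k] Matrix (Fin 2) (Fin 2) (CliffordAlgebra Q) :=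
  lift Q' ⟨processMatrix q involute ∘ₗ (ι Q).prodMap (Algebra.linearMap k _), fun m => by
    rw [LinearMap.comp_apply, ← processMatrix_cpMul q _ involute_involutive]
    exact (congrArg _ (cpMul_involute_ι_algebraMap_self Q q m.1 m.2)).trans
      (processMatrix_algebraMap q involute _)⟩

theorem toProcessMatrix_mapInl (a : CliffordAlgebra Q) :
    toProcessMatrix Q q (mapInl Q q a) = processMatrix q involute (a, 0) := by
  induction a using CliffordAlgebra.induction with
  | algebraMap c => rw [AlgHom.commutes, AlgHom.commutes, processMatrix_algebraMap]
  | ι x => simp [toProcessMatrix, mapInl_ι]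
  | mul a b ha hb =>
    rw [map_mul, map_mul, ha, hb, ← processMatrix_cpMul q _ involute_involutive]
    simp [cpMul]
  | add a b ha hb => rw [map_add, map_add, ha, hb, ← map_add, Prod.mk_add_mk, add_zero]

theorem toProcessMatrix_ofProcess (p : CliffordAlgebra Q × CliffordAlgebra Q) :
    toProcessMatrix Q q (ofProcess Q q p) = processMatrix q involute p := by
  have hv : toProcessMatrix Q q (ι Q' (0, 1)) = processMatrix q involute (0, 1) := by
    simp [toProcessMatrix]
  rw [ofProcess_apply, map_add, map_mul, toProcessMatrix_mapInl, toProcessMatrix_mapInl, hv,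
    ← processMatrix_cpMul q _ involute_involutive, ← map_add]
  simp [cpMul]

theorem ofProcess_injective : Function.Injective (ofProcess Q q) := fun p u h =>
  processMatrix_injective q involute <| by
    rw [← toProcessMatrix_ofProcess, h, toProcessMatrix_ofProcess]

noncomputable def ofProcessEquiv :
    (CliffordAlgebra Q × CliffordAlgebra Q) ≃ₗ[k] CliffordAlgebra Q' :=
  LinearEquiv.ofBijective (ofProcess Q q) ⟨ofProcess_injective Q q, ofProcess_surjective Q q⟩

theorem ofProcessEquiv_apply (p : CliffordAlgebra Q × CliffordAlgebra Q) :
    ofProcessEquiv Q q p = ofProcess Q q p := rfl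

end CliffordAlgebra

theorem CliffordAlgebra.exists_process_linearEquiv_of_equivalent {k V W : Type*} [Field k]
    [AddCommGroup V] [Module k V] [AddCommGroup W] [Module k W] {Q : QuadraticForm k V} {q : k}
    {Q₁ : QuadraticForm k W} (h : Q₁.Equivalent (Q.prod (q • QuadraticMap.sq))) :
    ∃ φ : (CliffordAlgebra Q × CliffordAlgebra Q) ≃ₗ[k] CliffordAlgebra Q₁,
      φ (1, 0) = 1 ∧ ∀ p u, φ (cpMul q involute p u) = φ p * φ u := by
  obtain ⟨e⟩ := h
  refine ⟨ofProcessEquiv Q q ≪≫ₗ (equivOfIsometry e.symm).toLinearEquiv, ?_, fun p u => ?_⟩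
  · simp [ofProcessEquiv_apply, ofProcess_apply]
  · simp only [LinearEquiv.trans_apply, ofProcessEquiv_apply, AlgEquiv.toLinearEquiv_apply,
      ofProcess_cpMul, map_mul]

section WeightedSumSquares

variable {k ι κ : Type*} [Field k] [Fintype ι] [Fintype κ]

theorem weightedSumSquares_equivalent_prod_sq (e : κ ≃ Option ι) {w : κ → k} {w₀ : ι → k}
    {q : k} (hw : ∀ i, w (e.symm (some i)) = w₀ i) (hq : w (e.symm none) = q) :
    (QuadraticMap.weightedSumSquares k w).Equivalent
      ((QuadraticMap.weightedSumSquares k w₀).prod (q • QuadraticMap.sq)) := by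
  refine ⟨⟨LinearEquiv.piCongrLeft' k (fun _ => k) e ≪≫ₗ LinearEquiv.piOptionEquivProd k ≪≫ₗ
    LinearEquiv.prodComm k _ _, fun x => ?_⟩⟩
  simp only [QuadraticMap.prod_apply, QuadraticMap.weightedSumSquares_apply]
  rw [← e.symm.sum_comp, Fintype.sum_option]
  simp only [smul_eq_mul, hw, hq]
  exact add_comm _ _

end WeightedSumSquares

section Signature

variable {k : Type*} [Field k]

theorem sigQF_succ_left_equivalent (r s : ℕ) :
    (sigQF k (r + 1) s).Equivalent ((sigQF k r s).prod ((1 : k) • QuadraticMap.sq)) := by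
  refine weightedSumSquares_equivalent_prod_sq
    ((finCongr (by omega : r + 1 + s = r + s + 1)).trans (finSuccEquiv' ⟨r, by omega⟩))
    (fun i => ?_) (by simp)
  simp only [Equiv.symm_trans_apply, finSuccEquiv'_symm_some, finCongr_symm, finCongr_apply,
    Fin.val_cast]
  rcases lt_or_ge (i : ℕ) r with hi | hi
  · rw [Fin.succAbove_of_castSucc_lt _ _ hi]
    simp [hi, Nat.lt_succ_of_lt hi]
  · rw [Fin.succAbove_of_le_castSucc _ _ hi]
    simp [hi.not_gt]

theorem sigQF_succ_right_equivalent (r s : ℕ) :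
    (sigQF k r (s + 1)).Equivalent ((sigQF k r s).prod ((-1 : k) • QuadraticMap.sq)) :=
  weightedSumSquares_equivalent_prod_sq (finSuccEquiv' (Fin.last (r + s)))
    (fun i => by simp) (by simp)

end Signature

theorem clifford_process_signature_general {k : Type*} [Field k] (r s : ℕ) :
    (∃ φ : (CliffordAlgebra (sigQF k r s) × CliffordAlgebra (sigQF k r s)) ≃ₗ[k]
        CliffordAlgebra (sigQF k (r + 1) s),
      φ ((1 : CliffordAlgebra (sigQF k r s)), 0) = 1 ∧
      ∀ p u, φ (cpMul (1 : k) (involute : CliffordAlgebra (sigQF k r s) →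
          CliffordAlgebra (sigQF k r s)) p u) = φ p * φ u) ∧
    (∃ ψ : (CliffordAlgebra (sigQF k r s) × CliffordAlgebra (sigQF k r s)) ≃ₗ[k]
        CliffordAlgebra (sigQF k r (s + 1)),
      ψ ((1 : CliffordAlgebra (sigQF k r s)), 0) = 1 ∧
      ∀ p u, ψ (cpMul (-1 : k) (involute : CliffordAlgebra (sigQF k r s) →
          CliffordAlgebra (sigQF k r s)) p u) = ψ p * ψ u) :=
  ⟨exists_process_linearEquiv_of_equivalent (sigQF_succ_left_equivalent r s),
    exists_process_linearEquiv_of_equivalent (sigQF_succ_right_equivalent r s)⟩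

/-- applying the Clifford process with parameter `q = +1`
(resp. `q = -1`) to `C(r,s)`, using the parity (grading) automorphism `σ`, yields an
algebra isomorphic to `C(r+1, s)` (resp. `C(r, s+1)`): there are unital linear
bijections intertwining the Clifford-process product with the Clifford product. -/
theorem clifford_process_signature {k : Type*} [Field k] (hk : (2 : k) ≠ 0) (r s : ℕ) :
    (∃ φ : (CliffordAlgebra (sigQF k r s) × CliffordAlgebra (sigQF k r s)) ≃ₗ[k]
        CliffordAlgebra (sigQF k (r + 1) s),
      φ ((1 : CliffordAlgebra (sigQF k r s)), 0) = 1 ∧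
      ∀ p u, φ (cpMul (1 : k) (involute : CliffordAlgebra (sigQF k r s) →
          CliffordAlgebra (sigQF k r s)) p u) = φ p * φ u) ∧
    (∃ ψ : (CliffordAlgebra (sigQF k r s) × CliffordAlgebra (sigQF k r s)) ≃ₗ[k]
        CliffordAlgebra (sigQF k r (s + 1)),
      ψ ((1 : CliffordAlgebra (sigQF k r s)), 0) = 1 ∧
      ∀ p u, ψ (cpMul (-1 : k) (involute : CliffordAlgebra (sigQF k r s) →
          CliffordAlgebra (sigQF k r s)) p u) = ψ p * ψ u) :=
  clifford_process_signature_general r s
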